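/- Let p be an odd prime and 𝒞 ≤ ℤ_p^α × ℤ_{p²}^β a ℤ_p ℤ_{p²}-additive code. Then 𝒟 = ⟨𝒞 ∪ { pP(w₁,w₂) : w₁,w₂ ∈ 𝒞 }⟩ is the smallest subgroup of ℤ_p^α × ℤ_{p²}^β containing 𝒞 whose Gray image is ℤ_p-linear: (i) Φ(𝒟) is linear, and (ii) any subgroup 𝒟' ⊇ 𝒞 with Φ(𝒟') linear contains 𝒟. -/

import Mathlib

/-- The Gray map `φ : ℤ_{p²} → ℤ_p^p`, sending `θ = θ₀·p + θ₁` (with digits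
`0 ≤ θ₀, θ₁ < p`) to the vector whose `i`-th coordinate is `θ₀ + θ₁·i`. -/
def gray (p : ℕ) (θ : ZMod (p ^ 2)) : Fin p → ZMod p :=
  fun i => ((θ.val / p : ℕ) : ZMod p) + ((θ.val % p : ℕ) : ZMod p) * (i.val : ZMod p)

/-- The carry function `P : ℤ_{p²} × ℤ_{p²} → {0,1}`: writing `u = a + p·c`,
`v = b + p·d` with digits in `{0,…,p-1}`, `P(u,v) = 1` iff `a + b ≥ p`. -/
def carry (p : ℕ) (u v : ZMod (p ^ 2)) : ℕ :=
  if p ≤ u.val % p + v.val % p then 1 else 0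

/-- The ambient group `ℤ_p^α × ℤ_{p²}^β` of a `ℤ_p ℤ_{p²}`-additive code. -/
abbrev Amb (p α β : ℕ) := (Fin α → ZMod p) × (Fin β → ZMod (p ^ 2))

/-- The vector `p·P(u,v) = (0, (p·P(u₂ⱼ, v₂ⱼ))ⱼ)` of carries. -/
def carryVec {p α β : ℕ} (u v : Amb p α β) : Amb p α β :=
  (0, fun j => ((p * carry p (u.2 j) (v.2 j) : ℕ) : ZMod (p ^ 2)))

/-- The carry vector on the `ℤ_{p²}`-block alone: `(p·P(uⱼ, vⱼ))ⱼ`. -/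
def carryY {p β : ℕ} (u v : Fin β → ZMod (p ^ 2)) : Fin β → ZMod (p ^ 2) :=
  fun j => ((p * carry p (u j) (v j) : ℕ) : ZMod (p ^ 2))

/-- The extended Gray map `Φ : ℤ_p^α × ℤ_{p²}^β → ℤ_p^{α+pβ}` (identity on the
first block, coordinatewise Gray map `φ` on the second block). -/
def grayExt {p α β : ℕ} (u : Amb p α β) : (Fin α ⊕ Fin β × Fin p) → ZMod p :=
  Sum.elim u.1 (fun x => gray p (u.2 x.1) x.2)

/-!
The Gray map is not additive, but it satisfies `Φ(u) + Φ(v) = Φ(u + v - pP(u,v))`, and it is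
injective. Hence for a subgroup `D` the image `Φ(D)` is closed under addition (so linear over `ℤ_p`)
exactly when `D` contains all carry vectors `pP(u,v)` of its elements. Carry vectors vanish modulo `p`
and depend only on the reductions modulo `p` of their arguments, so every element of
`⟨𝒞 ∪ {pP(w₁,w₂)}⟩` is congruent modulo `p` to a codeword of `𝒞`, and its carries are already
among the generators.
-/

def grayNat (p n : ℕ) : Fin p → ZMod p :=
  fun i => ((n / p : ℕ) : ZMod p) + (n : ZMod p) * (i.val : ZMod p)

def AddSubmonoid.toZModSubmodule {n : ℕ} [NeZero n] {M : Type*} [AddCommMonoid M]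
    [Module (ZMod n) M] (A : AddSubmonoid M) : Submodule (ZMod n) M where
  toAddSubmonoid := A
  smul_mem' c x hx := by
    rw [← ZMod.natCast_zmod_val c, Nat.cast_smul_eq_nsmul]
    exact A.nsmul_mem hx _

section GrayMap

variable {p : ℕ}

lemma gray_eq_grayNat (θ : ZMod (p ^ 2)) : gray p θ = grayNat p θ.val := by
  funext i
  simp only [gray, grayNat, ZMod.natCast_mod]

lemma gray_natCast (n : ℕ) : gray p (n : ZMod (p ^ 2)) = grayNat p n := by
  funext i
  simp only [gray, grayNat, ZMod.val_natCast]
  rw [Nat.mod_mod_of_dvd n (dvd_pow_self p two_ne_zero), pow_two, Nat.mod_mul_right_div_self]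
  simp only [ZMod.natCast_mod]

lemma mul_ite_le_add (a b : ℕ) : p * (if p ≤ a % p + b % p then 1 else 0) ≤ a + b := by
  split_ifs with h
  · have := Nat.mod_le a p
    have := Nat.mod_le b p
    omega
  · simp

lemma grayNat_add_sub_carry (hp : 0 < p) (a b : ℕ) :
    grayNat p (a + b - p * (if p ≤ a % p + b % p then 1 else 0)) = grayNat p a + grayNat p b := by
  have hdiv : (a + b - p * (if p ≤ a % p + b % p then 1 else 0)) / p = a / p + b / p := by
    rw [Nat.sub_mul_div, Nat.add_div hp, Nat.add_sub_cancel]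
  funext i
  simp only [grayNat, hdiv, Nat.cast_sub (mul_ite_le_add a b), Pi.add_apply]
  push_cast
  simp only [ZMod.natCast_self, zero_mul, sub_zero]
  ring

lemma gray_add_sub_carry [NeZero p] (u v : ZMod (p ^ 2)) :
    gray p (u + v - ((p * carry p u v : ℕ) : ZMod (p ^ 2))) = gray p u + gray p v := by
  have hle : p * carry p u v ≤ u.val + v.val := mul_ite_le_add u.val v.val
  have hcast : u + v - ((p * carry p u v : ℕ) : ZMod (p ^ 2))
      = ((u.val + v.val - p * carry p u v : ℕ) : ZMod (p ^ 2)) := by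
    rw [Nat.cast_sub hle]
    push_cast [ZMod.natCast_zmod_val]
    rfl
  rw [hcast, gray_natCast, gray_eq_grayNat u, gray_eq_grayNat v]
  exact grayNat_add_sub_carry (Nat.pos_of_neZero p) _ _

lemma gray_injective (hp : 1 < p) : Function.Injective (gray p) := by
  have : NeZero p := ⟨by omega⟩
  have hdiv : ∀ θ : ZMod (p ^ 2), θ.val / p < p := fun θ =>
    Nat.div_lt_of_lt_mul (by rw [← pow_two]; exact θ.val_lt)
  intro u v h
  have h0 := congrFun h ⟨0, by omega⟩
  have h1 := congrFun h ⟨1, hp⟩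
  simp only [gray, Nat.cast_zero, mul_zero, add_zero, Nat.cast_one, mul_one,
    ZMod.natCast_mod] at h0 h1
  rw [h0, add_left_cancel_iff, ZMod.natCast_eq_natCast_iff' _ _ p] at h1
  rw [ZMod.natCast_eq_natCast_iff' _ _ p, Nat.mod_eq_of_lt (hdiv u),
    Nat.mod_eq_of_lt (hdiv v)] at h0
  exact ZMod.val_injective _ (by rw [← Nat.div_add_mod u.val p, h0, h1, Nat.div_add_mod])

lemma carry_congr [NeZero p] {u u' v v' : ZMod (p ^ 2)} (hu : (u.cast : ZMod p) = u'.cast)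
    (hv : (v.cast : ZMod p) = v'.cast) : carry p u v = carry p u' v' := by
  have hval : ∀ w : ZMod (p ^ 2), w.val % p = (w.cast : ZMod p).val := fun w => by
    rw [ZMod.cast_eq_val, ZMod.val_natCast]
  simp only [carry, hval, hu, hv]

end GrayMap

section Amb

variable {p α β : ℕ}

def reduceMod (p α β : ℕ) : Amb p α β →+ (Fin β → ZMod p) :=
  ((ZMod.castHom (dvd_pow_self p two_ne_zero) (ZMod p)).toAddMonoidHom.compLeft (Fin β)).comp
    (AddMonoidHom.snd _ _)

@[simp]
lemma reduceMod_apply (x : Amb p α β) (j : Fin β) : reduceMod p α β x j = (x.2 j).cast := rfl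

lemma reduceMod_carryVec (u v : Amb p α β) : reduceMod p α β (carryVec u v) = 0 := by
  funext j
  simp [carryVec]

lemma carryVec_congr [NeZero p] {u u' v v' : Amb p α β}
    (hu : reduceMod p α β u = reduceMod p α β u') (hv : reduceMod p α β v = reduceMod p α β v') :
    carryVec u v = carryVec u' v' := by
  refine Prod.ext rfl (funext fun j => ?_)
  have hu' : ((u.2 j).cast : ZMod p) = (u'.2 j).cast := by simpa using congrFun hu j
  have hv' : ((v.2 j).cast : ZMod p) = (v'.2 j).cast := by simpa using congrFun hv j
  simp only [carryVec, carry_congr hu' hv']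

lemma grayExt_zero : grayExt (0 : Amb p α β) = 0 := by
  funext s
  rcases s with a | ⟨j, i⟩ <;> simp [grayExt, gray]

lemma grayExt_add_sub_carryVec [NeZero p] (u v : Amb p α β) :
    grayExt (u + v - carryVec u v) = grayExt u + grayExt v := by
  funext s
  rcases s with a | ⟨j, i⟩
  · simp [grayExt, carryVec]
  · exact congrFun (gray_add_sub_carry (u.2 j) (v.2 j)) i

lemma grayExt_injective (hp : 1 < p) : Function.Injective (grayExt : Amb p α β → _) :=
  fun _ _ h => Prod.ext (funext fun a => congrFun h (.inl a))
    (funext fun j => gray_injective hp (funext fun i => congrFun h (.inr (j, i))))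

theorem exists_submodule_eq_image_grayExt_iff (hp : 1 < p) (D : AddSubgroup (Amb p α β)) :
    (∃ W : Submodule (ZMod p) ((Fin α ⊕ Fin β × Fin p) → ZMod p),
        (W : Set ((Fin α ⊕ Fin β × Fin p) → ZMod p)) = grayExt '' (D : Set (Amb p α β))) ↔
      ∀ u ∈ D, ∀ v ∈ D, carryVec u v ∈ D := by
  have : NeZero p := ⟨by omega⟩
  constructor
  · rintro ⟨W, hW⟩ u hu v hv
    have hmem : ∀ w ∈ D, grayExt w ∈ W := fun w hw => by
      rw [← SetLike.mem_coe, hW]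
      exact ⟨w, hw, rfl⟩
    have hsum : grayExt u + grayExt v ∈ (W : Set _) := W.add_mem (hmem u hu) (hmem v hv)
    rw [hW] at hsum
    obtain ⟨z, hz, hzuv⟩ := hsum
    have hz_eq : z = u + v - carryVec u v :=
      grayExt_injective hp (hzuv.trans (grayExt_add_sub_carryVec u v).symm)
    have hcarry : carryVec u v = u + v - z := by rw [hz_eq]; abel
    rw [hcarry]
    exact D.sub_mem (D.add_mem hu hv) hz
  · intro hD
    let A : AddSubmonoid ((Fin α ⊕ Fin β × Fin p) → ZMod p) :=
      { carrier := grayExt '' (D : Set (Amb p α β))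
        add_mem' := by
          rintro _ _ ⟨u, hu, rfl⟩ ⟨v, hv, rfl⟩
          exact ⟨u + v - carryVec u v, D.sub_mem (D.add_mem hu hv) (hD u hu v hv),
            grayExt_add_sub_carryVec u v⟩
        zero_mem' := ⟨0, D.zero_mem, grayExt_zero⟩ }
    exact ⟨A.toZModSubmodule, rfl⟩

lemma closure_le_comap_reduceMod (C : AddSubgroup (Amb p α β)) :
    AddSubgroup.closure ((C : Set (Amb p α β)) ∪
        {x : Amb p α β | ∃ w₁ ∈ C, ∃ w₂ ∈ C, x = carryVec w₁ w₂}) ≤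
      (C.map (reduceMod p α β)).comap (reduceMod p α β) := by
  refine (AddSubgroup.closure_le _).2 (Set.union_subset (fun x hx => ⟨x, hx, rfl⟩) ?_)
  rintro _ ⟨u, -, v, -, rfl⟩
  simp only [SetLike.mem_coe, AddSubgroup.mem_comap, reduceMod_carryVec]
  exact zero_mem _

lemma carryVec_mem_closure [NeZero p] (C : AddSubgroup (Amb p α β)) :
    let D := AddSubgroup.closure ((C : Set (Amb p α β)) ∪
      {x : Amb p α β | ∃ w₁ ∈ C, ∃ w₂ ∈ C, x = carryVec w₁ w₂})
    ∀ u ∈ D, ∀ v ∈ D, carryVec u v ∈ D := by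
  intro D u hu v hv
  obtain ⟨c, hc, hcu⟩ := closure_le_comap_reduceMod C hu
  obtain ⟨d, hd, hdv⟩ := closure_le_comap_reduceMod C hv
  rw [← carryVec_congr hcu hdv]
  exact AddSubgroup.subset_closure (Or.inr ⟨c, hc, d, hd, rfl⟩)

end Amb

theorem closure_minimal_linear_general (p α β : ℕ) (hp : p.Prime)
    (C : AddSubgroup (Amb p α β)) :
    (∃ W : Submodule (ZMod p) ((Fin α ⊕ Fin β × Fin p) → ZMod p),
        (W : Set ((Fin α ⊕ Fin β × Fin p) → ZMod p))
          = grayExt '' (↑(AddSubgroup.closure ((C : Set (Amb p α β)) ∪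
              {x : Amb p α β | ∃ w₁ ∈ C, ∃ w₂ ∈ C, x = carryVec w₁ w₂})) : Set (Amb p α β))) ∧
    ∀ D' : AddSubgroup (Amb p α β), (C : Set (Amb p α β)) ⊆ ↑D' →
      (∃ W : Submodule (ZMod p) ((Fin α ⊕ Fin β × Fin p) → ZMod p),
        (W : Set ((Fin α ⊕ Fin β × Fin p) → ZMod p)) = grayExt '' (D' : Set (Amb p α β))) →
      AddSubgroup.closure ((C : Set (Amb p α β)) ∪
          {x : Amb p α β | ∃ w₁ ∈ C, ∃ w₂ ∈ C, x = carryVec w₁ w₂}) ≤ D' := by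
  have : NeZero p := ⟨hp.ne_zero⟩
  refine ⟨(exists_submodule_eq_image_grayExt_iff hp.one_lt _).2 (carryVec_mem_closure C),
    fun D' hCD' hD' => (AddSubgroup.closure_le _).2 (Set.union_subset hCD' ?_)⟩
  rintro _ ⟨u, hu, v, hv, rfl⟩
  exact (exists_submodule_eq_image_grayExt_iff hp.one_lt D').1 hD' u (hCD' hu) v (hCD' hv)

/-- `𝒟 = ⟨𝒞 ∪ {pP(w₁,w₂)}⟩` is the smallest subgroup containing
`𝒞` with linear Gray image: (i) `Φ(𝒟)` is linear; (ii) every subgroup `𝒟' ⊇ 𝒞`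
with linear Gray image contains `𝒟`. -/
theorem closure_minimal_linear (p α β : ℕ) (hp : p.Prime) (hodd : Odd p)
    (C : AddSubgroup (Amb p α β)) :
    (∃ W : Submodule (ZMod p) ((Fin α ⊕ Fin β × Fin p) → ZMod p),
        (W : Set ((Fin α ⊕ Fin β × Fin p) → ZMod p))
          = grayExt '' (↑(AddSubgroup.closure ((C : Set (Amb p α β)) ∪
              {x : Amb p α β | ∃ w₁ ∈ C, ∃ w₂ ∈ C, x = carryVec w₁ w₂})) : Set (Amb p α β))) ∧
    ∀ D' : AddSubgroup (Amb p α β), (C : Set (Amb p α β)) ⊆ ↑D' →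
      (∃ W : Submodule (ZMod p) ((Fin α ⊕ Fin β × Fin p) → ZMod p),
        (W : Set ((Fin α ⊕ Fin β × Fin p) → ZMod p)) = grayExt '' (D' : Set (Amb p α β))) →
      AddSubgroup.closure ((C : Set (Amb p α β)) ∪
          {x : Amb p α β | ∃ w₁ ∈ C, ∃ w₂ ∈ C, x = carryVec w₁ w₂}) ≤ D' :=
  closure_minimal_linear_general p α β hp C
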